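/- arXiv:1103.3958 — 5 statements merged into one kernel-verified Lean document; each statement's English description precedes it below -/
import Mathlib

section
/- For all real numbers t > 0 and x > 0, with d = 2 and γ = 2/π, the length density of the typical I-segment of a stationary and isotropic planar STIT tessellation with time parameter t satisfies ∫₀ᵗ (2/π)·s·e^{−(2/π)·s·x} · (2s/t²) ds = (1/(t²·x³)) · (π² − (π² + 2π·t·x + 2t²·x²)·e^{−(2/π)·t·x}). -/
open MeasureTheory Real

theorem hasDerivAt_sq_mul_exp_neg_mul_antideriv {c : ℝ} (hc : c ≠ 0) (s : ℝ) :
    HasDerivAt (fun s => -(((c * s) ^ 2 + 2 * (c * s) + 2) * exp (-(c * s)) / c ^ 3))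
      (s ^ 2 * exp (-(c * s))) s := by
  have hlin : HasDerivAt (fun s => c * s) c s := by simpa using (hasDerivAt_id s).const_mul c
  have hpoly : HasDerivAt (fun s => (c * s) ^ 2 + 2 * (c * s) + 2) (2 * (c * s) * c + 2 * c) s :=
    (((hlin.pow 2).congr_deriv (by ring)).add (hlin.const_mul 2)).add_const 2
  have hexp : HasDerivAt (fun s => exp (-(c * s))) (exp (-(c * s)) * -c) s := hlin.neg.exp
  refine (((hpoly.fun_mul hexp).div_const (c ^ 3)).fun_neg).congr_deriv ?_
  field_simp
  ring

theorem integral_sq_mul_exp_neg_mul {c : ℝ} (hc : c ≠ 0) (t : ℝ) :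
    ∫ s in (0:ℝ)..t, s ^ 2 * exp (-(c * s)) =
      (2 - ((c * t) ^ 2 + 2 * (c * t) + 2) * exp (-(c * t))) / c ^ 3 := by
  rw [intervalIntegral.integral_eq_sub_of_hasDerivAt
    (fun s _ => hasDerivAt_sq_mul_exp_neg_mul_antideriv hc s)
    (Continuous.intervalIntegrable (by fun_prop) 0 t)]
  simp only [mul_zero, neg_zero, exp_zero]
  ring

theorem stit_Isegment_density_planar_general (t x : ℝ) (hx : 0 < x) :
    (∫ s in (0:ℝ)..t, (2 / Real.pi) * s * Real.exp (-((2 / Real.pi) * s * x)) * (2 * s / t ^ 2))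
      = (1 / (t ^ 2 * x ^ 3)) *
        (Real.pi ^ 2 -
          (Real.pi ^ 2 + 2 * Real.pi * t * x + 2 * t ^ 2 * x ^ 2) *
            Real.exp (-((2 / Real.pi) * t * x))) := by
  have hc : 2 / π * x ≠ 0 := by positivity
  have hintegrand : ∀ s : ℝ, 2 / π * s * exp (-(2 / π * s * x)) * (2 * s / t ^ 2) =
      4 / (π * t ^ 2) * (s ^ 2 * exp (-(2 / π * x * s))) := fun s => by
    rw [mul_right_comm _ s x]
    field_simp
    ring
  simp only [hintegrand, intervalIntegral.integral_const_mul, integral_sq_mul_exp_neg_mul hc,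
    mul_right_comm _ t x]
  field_simp
  ring

/-- Explicit planar (`d = 2`, `γ = 2/π`) length density of the typical
I-segment of a stationary and isotropic STIT tessellation:
`p₂(x) = (1/(t² x³)) (π² − (π² + 2π t x + 2 t² x²) e^{−(2/π) t x})`. -/
theorem stit_Isegment_density_planar (t x : ℝ) (ht : 0 < t) (hx : 0 < x) :
    (∫ s in (0:ℝ)..t, (2 / Real.pi) * s * Real.exp (-((2 / Real.pi) * s * x)) * (2 * s / t ^ 2))
      = (1 / (t ^ 2 * x ^ 3)) *
        (Real.pi ^ 2 -
          (Real.pi ^ 2 + 2 * Real.pi * t * x + 2 * t ^ 2 * x ^ 2) *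
            Real.exp (-((2 / Real.pi) * t * x))) :=
  stit_Isegment_density_planar_general t x hx
end

section
/- For every real t > 0, the mean length of the typical I-segment of a stationary and isotropic planar STIT tessellation with time parameter t equals π/t; that is, with p₂(x) = ∫₀ᵗ (2/π)·s·e^{−(2/π)·s·x} · (2s/t²) ds, the function x ↦ x·p₂(x) is integrable on (0,∞) and ∫₀^∞ x·p₂(x) dx = π/t. -/
/-!
The density `p_d` is a mixture, over `s ∈ (0, t]` with weight `d s^(d-1) / t^d`, of exponential
densities of rate `γ s`. An exponential law of rate `a` has mean `1 / a`, so by Fubini–Tonelli the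
mean of `p_d` is `∫₀ᵗ d s^(d-2) / (γ t^d) ds = d / ((d - 1) γ t)`, which is `π / t` for `d = 2`,
`γ = 2 / π`.
-/

open MeasureTheory Real Set

lemma integrableOn_mul_mul_exp_neg_mul {a : ℝ} (ha : 0 < a) (c : ℝ) :
    IntegrableOn (fun x : ℝ => x * (a * exp (-(a * x)) * c)) (Ioi 0) := by
  have h : IntegrableOn (fun x : ℝ => a * c * (x ^ (1:ℝ) * exp (-a * x ^ (1:ℝ)))) (Ioi 0) :=
    (integrableOn_rpow_mul_exp_neg_mul_rpow (by norm_num) zero_lt_one ha).const_mul _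
  refine h.congr_fun (fun x _ => ?_) measurableSet_Ioi
  simp only [rpow_one, neg_mul]
  ring

lemma integral_mul_mul_exp_neg_mul {a : ℝ} (ha : 0 < a) (c : ℝ) :
    ∫ x in Ioi (0:ℝ), x * (a * exp (-(a * x)) * c) = c / a := by
  have h := integral_rpow_mul_exp_neg_mul_Ioi (a := 2) two_pos ha
  norm_num [Gamma_two] at h
  calc ∫ x in Ioi (0:ℝ), x * (a * exp (-(a * x)) * c)
      = a * c * ∫ x in Ioi (0:ℝ), x * exp (-(a * x)) := by
        rw [← integral_const_mul]
        congr 1 with x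
        ring
    _ = c / a := by
        rw [h]
        field_simp

section ExpMixture

variable {γ t : ℝ} {w : ℝ → ℝ}

lemma integrable_uncurry_mul_expMixture (hγ : 0 < γ) (hw : Measurable w)
    (hws : IntegrableOn (fun s => w s / s) (Ioc 0 t)) :
    Integrable (Function.uncurry fun s x : ℝ => x * (γ * s * exp (-(γ * s * x)) * w s))
      ((volume.restrict (Ioc 0 t)).prod (volume.restrict (Ioi 0))) := by
  have hmeas : Measurable
      (Function.uncurry fun s x : ℝ => x * (γ * s * exp (-(γ * s * x)) * w s)) := by
    fun_prop
  rw [integrable_prod_iff hmeas.aestronglyMeasurable]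
  refine ⟨(ae_restrict_iff' measurableSet_Ioc).2 (.of_forall fun s hs =>
    integrableOn_mul_mul_exp_neg_mul (mul_pos hγ hs.1) (w s)), ?_⟩
  have hnorm : ∀ s ∈ Ioc 0 t, ∫ x in Ioi (0:ℝ), ‖x * (γ * s * exp (-(γ * s * x)) * w s)‖
      = γ⁻¹ * ‖w s / s‖ := by
    intro s hs
    have hγs : 0 < γ * s := mul_pos hγ hs.1
    calc ∫ x in Ioi (0:ℝ), ‖x * (γ * s * exp (-(γ * s * x)) * w s)‖
        = ∫ x in Ioi (0:ℝ), x * (γ * s * exp (-(γ * s * x)) * |w s|) := by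
          refine setIntegral_congr_fun measurableSet_Ioi fun x (hx : 0 < x) => ?_
          simp only [norm_mul, Real.norm_eq_abs, abs_of_pos hx, abs_of_pos hγ, abs_of_pos hs.1,
            abs_of_pos (exp_pos _)]
      _ = γ⁻¹ * ‖w s / s‖ := by
          rw [integral_mul_mul_exp_neg_mul hγs, norm_div, Real.norm_eq_abs, Real.norm_eq_abs,
            abs_of_pos hs.1]
          field_simp
  exact (hws.norm.const_mul γ⁻¹).congr
    ((ae_restrict_iff' measurableSet_Ioc).2 (.of_forall fun s hs => (hnorm s hs).symm))

theorem integrableOn_mul_expMixture (hγ : 0 < γ) (ht : 0 ≤ t) (hw : Measurable w)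
    (hws : IntegrableOn (fun s => w s / s) (Ioc 0 t)) :
    IntegrableOn (fun x => x * ∫ s in 0..t, γ * s * exp (-(γ * s * x)) * w s) (Ioi 0) := by
  refine (integrable_uncurry_mul_expMixture hγ hw hws).integral_prod_right.congr
    (.of_forall fun x => ?_)
  simp only [intervalIntegral.integral_of_le ht, Function.uncurry_apply_pair, integral_const_mul]

theorem integral_mul_expMixture (hγ : 0 < γ) (ht : 0 ≤ t) (hw : Measurable w)
    (hws : IntegrableOn (fun s => w s / s) (Ioc 0 t)) :
    ∫ x in Ioi 0, x * ∫ s in 0..t, γ * s * exp (-(γ * s * x)) * w s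
      = γ⁻¹ * ∫ s in Ioc 0 t, w s / s := by
  calc ∫ x in Ioi 0, x * ∫ s in 0..t, γ * s * exp (-(γ * s * x)) * w s
      = ∫ x in Ioi 0, ∫ s in Ioc 0 t, x * (γ * s * exp (-(γ * s * x)) * w s) := by
        simp only [intervalIntegral.integral_of_le ht, integral_const_mul]
    _ = ∫ s in Ioc 0 t, ∫ x in Ioi 0, x * (γ * s * exp (-(γ * s * x)) * w s) :=
        (integral_integral_swap (integrable_uncurry_mul_expMixture hγ hw hws)).symm
    _ = ∫ s in Ioc 0 t, γ⁻¹ * (w s / s) := by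
        refine setIntegral_congr_fun measurableSet_Ioc fun s hs => ?_
        rw [integral_mul_mul_exp_neg_mul (mul_pos hγ hs.1)]
        field_simp
    _ = γ⁻¹ * ∫ s in Ioc 0 t, w s / s := integral_const_mul _ _

end ExpMixture

noncomputable def isegmentMixingWeight (d : ℕ) (t s : ℝ) : ℝ := d * s ^ (d - 1) / t ^ d

noncomputable def isegmentLengthDensity (d : ℕ) (γ t x : ℝ) : ℝ :=
  ∫ s in 0..t, γ * s * exp (-(γ * s * x)) * isegmentMixingWeight d t s

section Isegment

variable {d : ℕ} {γ t : ℝ}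

lemma measurable_isegmentMixingWeight (d : ℕ) (t : ℝ) :
    Measurable (isegmentMixingWeight d t) := by
  unfold isegmentMixingWeight
  fun_prop

lemma isegmentMixingWeight_div_self (hd : 2 ≤ d) {s : ℝ} (hs : s ≠ 0) :
    isegmentMixingWeight d t s / s = d / t ^ d * s ^ (d - 2) := by
  obtain ⟨k, rfl⟩ := Nat.exists_eq_add_of_le' hd
  simp only [isegmentMixingWeight, Nat.add_sub_cancel, show k + 2 - 1 = k + 1 by omega, pow_succ]
  field_simp

lemma integrableOn_isegmentMixingWeight_div (hd : 2 ≤ d) :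
    IntegrableOn (fun s : ℝ => isegmentMixingWeight d t s / s) (Ioc 0 t) := by
  have h : IntegrableOn (fun s : ℝ => d / t ^ d * s ^ (d - 2)) (Icc 0 t) :=
    (continuous_const.mul (continuous_pow _)).integrableOn_Icc
  exact (h.mono_set Ioc_subset_Icc_self).congr_fun
    (fun s hs => (isegmentMixingWeight_div_self hd hs.1.ne').symm) measurableSet_Ioc

lemma setIntegral_isegmentMixingWeight_div (hd : 2 ≤ d) (ht : 0 < t) :
    ∫ s in Ioc 0 t, isegmentMixingWeight d t s / s = d / ((d - 1) * t) := by
  calc ∫ s in Ioc 0 t, isegmentMixingWeight d t s / s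
      = ∫ s in Ioc 0 t, d / t ^ d * s ^ (d - 2) :=
        setIntegral_congr_fun measurableSet_Ioc fun s hs =>
          isegmentMixingWeight_div_self hd hs.1.ne'
    _ = d / t ^ d * (t ^ (d - 2 + 1) / (d - 2 + 1 : ℕ)) := by
        rw [integral_const_mul, ← intervalIntegral.integral_of_le ht.le, integral_pow]
        simp
    _ = d / ((d - 1) * t) := by
        obtain ⟨k, rfl⟩ := Nat.exists_eq_add_of_le' hd
        have hk : (k : ℝ) + 1 ≠ 0 := by positivity
        simp only [Nat.add_sub_cancel]
        push_cast
        rw [show (k : ℝ) + 2 - 1 = k + 1 by ring]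
        field_simp
        ring

theorem integrableOn_mul_isegmentLengthDensity (hd : 2 ≤ d) (hγ : 0 < γ) (ht : 0 < t) :
    IntegrableOn (fun x => x * isegmentLengthDensity d γ t x) (Ioi 0) :=
  integrableOn_mul_expMixture hγ ht.le (measurable_isegmentMixingWeight d t)
    (integrableOn_isegmentMixingWeight_div hd)

theorem integral_mul_isegmentLengthDensity (hd : 2 ≤ d) (hγ : 0 < γ) (ht : 0 < t) :
    ∫ x in Ioi 0, x * isegmentLengthDensity d γ t x = d / ((d - 1) * γ * t) := by
  unfold isegmentLengthDensity
  rw [integral_mul_expMixture hγ ht.le (measurable_isegmentMixingWeight d t)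
    (integrableOn_isegmentMixingWeight_div hd), setIntegral_isegmentMixingWeight_div hd ht]
  field_simp

end Isegment

/-- The mean length of the typical I-segment of a stationary and isotropic
planar STIT tessellation with time parameter `t` equals `π / t`. -/
theorem stit_Isegment_mean_length_planar (t : ℝ) (ht : 0 < t) :
    MeasureTheory.IntegrableOn
      (fun x : ℝ => x *
        ∫ s in (0:ℝ)..t, (2 / Real.pi) * s * Real.exp (-((2 / Real.pi) * s * x)) * (2 * s / t ^ 2))
      (Set.Ioi 0) ∧
    (∫ x in Set.Ioi (0:ℝ), x *
        ∫ s in (0:ℝ)..t, (2 / Real.pi) * s * Real.exp (-((2 / Real.pi) * s * x)) * (2 * s / t ^ 2))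
      = Real.pi / t := by
  have hp (x : ℝ) : isegmentLengthDensity 2 (2 / π) t x =
      ∫ s in (0:ℝ)..t, (2 / π) * s * exp (-((2 / π) * s * x)) * (2 * s / t ^ 2) := by
    simp [isegmentLengthDensity, isegmentMixingWeight]
  have hγ : 0 < 2 / π := by positivity
  simp_rw [← hp]
  refine ⟨integrableOn_mul_isegmentLengthDensity le_rfl hγ ht, ?_⟩
  rw [integral_mul_isegmentLengthDensity le_rfl hγ ht]
  field_simp
  norm_num
end

section
/- For every real t > 0, the mean length of the typical I-segment of a stationary and isotropic spatial STIT tessellation with time parameter t equals 3/t; that is, with p₃(x) = ∫₀ᵗ (1/2)·s·e^{−(1/2)·s·x} · (3s²/t³) ds, the function x ↦ x·p₃(x) is integrable on (0,∞) and ∫₀^∞ x·p₃(x) dx = 3/t. -/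
/-!
The density `p_d` is a mixture, over `s ∈ (0, t]` with weight `d s^(d-1) / t^d`, of exponential
densities with rate `γ s`. By Fubini, the mean of a mixture of exponential laws is the mixture of
their means `1 / (γ s)`, so the mean length is `∫₀ᵗ d s^(d-2) / (γ t^d) ds = d / ((d - 1) γ t)`,
which is `3 / t` for `d = 3`, `γ = 1/2`.
-/

open MeasureTheory Real Set

lemma integral_Ioi_mul_exp_neg_mul {a : ℝ} (ha : 0 < a) :
    ∫ x in Ioi (0 : ℝ), x * exp (-(a * x)) = 1 / a ^ 2 := by
  have h := integral_rpow_mul_exp_neg_mul_Ioi two_pos ha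
  norm_num [Gamma_two] at h
  simpa using h

lemma integrableOn_Ioi_mul_exp_neg_mul {a : ℝ} (ha : 0 < a) :
    IntegrableOn (fun x => x * exp (-(a * x))) (Ioi 0) :=
  .of_integral_ne_zero (by rw [integral_Ioi_mul_exp_neg_mul ha]; positivity)

private lemma mul_exp_density_eq {a c x : ℝ} :
    x * (a * exp (-(a * x)) * c) = a * c * (x * exp (-(a * x))) := by ring

lemma integrableOn_Ioi_mul_exp_density {a : ℝ} (ha : 0 < a) (c : ℝ) :
    IntegrableOn (fun x => x * (a * exp (-(a * x)) * c)) (Ioi 0) := by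
  rw [IntegrableOn]
  simpa only [mul_exp_density_eq] using (integrableOn_Ioi_mul_exp_neg_mul ha).const_mul (a * c)

lemma integral_Ioi_mul_exp_density {a : ℝ} (ha : 0 < a) (c : ℝ) :
    ∫ x in Ioi (0 : ℝ), x * (a * exp (-(a * x)) * c) = c / a := by
  simp only [mul_exp_density_eq, integral_const_mul, integral_Ioi_mul_exp_neg_mul ha]
  field_simp

lemma integral_Ioi_norm_mul_exp_density {a : ℝ} (ha : 0 < a) (c : ℝ) :
    ∫ x in Ioi (0 : ℝ), ‖x * (a * exp (-(a * x)) * c)‖ = ‖c / a‖ := by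
  have hnorm : ∀ x ∈ Ioi (0 : ℝ),
      ‖x * (a * exp (-(a * x)) * c)‖ = x * (a * exp (-(a * x)) * ‖c‖) := by
    intro x hx
    rw [norm_mul, norm_mul, norm_mul, norm_of_nonneg (le_of_lt hx), norm_of_nonneg ha.le,
      norm_of_nonneg (exp_pos _).le]
  rw [setIntegral_congr_fun measurableSet_Ioi hnorm, integral_Ioi_mul_exp_density ha,
    norm_div, norm_of_nonneg ha.le]

section ExponentialMixture

variable {α : Type*} [MeasurableSpace α] {μ : Measure α} {rate w : α → ℝ}

lemma integrable_prod_mul_exponentialMixture (hrate : Measurable rate) (hw : Measurable w)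
    (hpos : ∀ᵐ s ∂μ, 0 < rate s) (hint : Integrable (fun s => w s / rate s) μ) :
    Integrable (fun p : α × ℝ => p.2 * (rate p.1 * exp (-(rate p.1 * p.2)) * w p.1))
      (μ.prod (volume.restrict (Ioi 0))) := by
  have hmeas : Measurable fun p : α × ℝ =>
      p.2 * (rate p.1 * exp (-(rate p.1 * p.2)) * w p.1) := by
    fun_prop
  refine (integrable_prod_iff hmeas.aestronglyMeasurable).2 ⟨?_, ?_⟩
  · filter_upwards [hpos] with s hs using integrableOn_Ioi_mul_exp_density hs (w s)
  · refine hint.norm.congr ?_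
    filter_upwards [hpos] with s hs using (integral_Ioi_norm_mul_exp_density hs (w s)).symm

variable [SFinite μ]

lemma integrableOn_mul_exponentialMixture (hrate : Measurable rate) (hw : Measurable w)
    (hpos : ∀ᵐ s ∂μ, 0 < rate s) (hint : Integrable (fun s => w s / rate s) μ) :
    IntegrableOn (fun x => x * ∫ s, rate s * exp (-(rate s * x)) * w s ∂μ) (Ioi 0) := by
  rw [IntegrableOn]
  simpa only [integral_const_mul] using
    (integrable_prod_mul_exponentialMixture hrate hw hpos hint).integral_prod_right

lemma integral_mul_exponentialMixture (hrate : Measurable rate) (hw : Measurable w)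
    (hpos : ∀ᵐ s ∂μ, 0 < rate s) (hint : Integrable (fun s => w s / rate s) μ) :
    ∫ x in Ioi (0 : ℝ), x * ∫ s, rate s * exp (-(rate s * x)) * w s ∂μ
      = ∫ s, w s / rate s ∂μ := by
  calc ∫ x in Ioi (0 : ℝ), x * ∫ s, rate s * exp (-(rate s * x)) * w s ∂μ
      = ∫ x in Ioi (0 : ℝ), ∫ s, x * (rate s * exp (-(rate s * x)) * w s) ∂μ := by
        simp only [integral_const_mul]
    _ = ∫ s, (∫ x in Ioi (0 : ℝ), x * (rate s * exp (-(rate s * x)) * w s)) ∂μ :=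
        (integral_integral_swap (integrable_prod_mul_exponentialMixture hrate hw hpos hint)).symm
    _ = ∫ s, w s / rate s ∂μ :=
        integral_congr_ae <| by
          filter_upwards [hpos] with s hs using integral_Ioi_mul_exp_density hs (w s)

end ExponentialMixture

noncomputable def stitISegmentDensity (d : ℕ) (γ t x : ℝ) : ℝ :=
  ∫ s in (0 : ℝ)..t, γ * s * exp (-(γ * s * x)) * (d * s ^ (d - 1) / t ^ d)

theorem stitISegmentDensity_mean {d : ℕ} (hd : 2 ≤ d) {γ t : ℝ} (hγ : 0 < γ) (ht : 0 < t) :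
    IntegrableOn (fun x => x * stitISegmentDensity d γ t x) (Ioi 0) ∧
      ∫ x in Ioi (0 : ℝ), x * stitISegmentDensity d γ t x = d / ((d - 1) * γ * t) := by
  obtain ⟨n, rfl⟩ : ∃ n, d = n + 2 := ⟨d - 2, by omega⟩
  set rate : ℝ → ℝ := fun s => γ * s
  set w : ℝ → ℝ := fun s => (n + 2 : ℕ) * s ^ (n + 2 - 1) / t ^ (n + 2)
  have hdens : ∀ x, stitISegmentDensity (n + 2) γ t x
      = ∫ s in Ioc 0 t, rate s * exp (-(rate s * x)) * w s :=
    fun x => intervalIntegral.integral_of_le ht.le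
  have hpos : ∀ᵐ s ∂(volume.restrict (Ioc 0 t)), 0 < rate s := by
    filter_upwards [ae_restrict_mem measurableSet_Ioc] with s hs using mul_pos hγ hs.1
  have hratio : ∀ s ∈ Ioc (0 : ℝ) t, w s / rate s = (n + 2) / (γ * t ^ (n + 2)) * s ^ n := by
    intro s hs
    have hs0 : s ≠ 0 := hs.1.ne'
    simp only [w, rate]
    push_cast
    field_simp
    ring
  have hint : IntegrableOn (fun s => w s / rate s) (Ioc 0 t) :=
    ((continuous_const.mul (continuous_pow n)).integrableOn_Ioc).congr_fun
      (fun s hs => (hratio s hs).symm) measurableSet_Ioc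
  have hrate : Measurable rate := by fun_prop
  have hw : Measurable w := by fun_prop
  simp only [hdens]
  refine ⟨integrableOn_mul_exponentialMixture hrate hw hpos hint, ?_⟩
  rw [integral_mul_exponentialMixture hrate hw hpos hint,
    setIntegral_congr_fun measurableSet_Ioc hratio, integral_const_mul,
    ← intervalIntegral.integral_of_le ht.le, integral_pow]
  push_cast
  rw [zero_pow n.succ_ne_zero, sub_zero, show (n : ℝ) + 2 - 1 = n + 1 by ring]
  field_simp
  ring

/-- The mean length of the typical I-segment of a stationary and isotropic
spatial STIT tessellation with time parameter `t` equals `3 / t`. -/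
theorem stit_Isegment_mean_length_spatial (t : ℝ) (ht : 0 < t) :
    MeasureTheory.IntegrableOn
      (fun x : ℝ => x *
        ∫ s in (0:ℝ)..t, (1 / 2) * s * Real.exp (-((1 / 2) * s * x)) * (3 * s ^ 2 / t ^ 3))
      (Set.Ioi 0) ∧
    (∫ x in Set.Ioi (0:ℝ), x *
        ∫ s in (0:ℝ)..t, (1 / 2) * s * Real.exp (-((1 / 2) * s * x)) * (3 * s ^ 2 / t ^ 3))
      = 3 / t := by
  have hdens : ∀ x,
      (∫ s in (0:ℝ)..t, (1 / 2) * s * Real.exp (-((1 / 2) * s * x)) * (3 * s ^ 2 / t ^ 3))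
        = stitISegmentDensity 3 (1 / 2) t x :=
    fun x => by norm_num [stitISegmentDensity]
  obtain ⟨hint, hmean⟩ := stitISegmentDensity_mean (by norm_num : 2 ≤ 3) one_half_pos ht
  simp only [hdens]
  refine ⟨hint, hmean.trans ?_⟩
  norm_num
end

section
/- For every real t > 0, the second moment of the length of the typical I-segment of a stationary and isotropic spatial STIT tessellation with time parameter t equals 24/t²; that is, with p₃(x) = ∫₀ᵗ (1/2)·s·e^{−(1/2)·s·x} · (3s²/t³) ds, the function x ↦ x²·p₃(x) is integrable on (0,∞) and ∫₀^∞ x²·p₃(x) dx = 24/t². -/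
/-!
The density `p_d` is a mixture over `s ∈ (0, t]` of exponential densities with rate `γ s`,
whose `n`-th moments are `n! / (γ s)^n`. By Tonelli the `n`-th moment of `p_d` is therefore
`∫₀ᵗ n! / (γ s)^n · d s^(d-1) / t^d ds = n! d / ((d - n) γ^n t^n)`, finite for `n < d`.
For `d = 3`, `n = 2`, `γ = 1/2` this is `24 / t²`.
-/

open MeasureTheory Real Set Nat

section ExponentialMoments

variable {r : ℝ}

lemma integrableOn_pow_mul_exp_neg_mul_Ioi (n : ℕ) (hr : 0 < r) :
    IntegrableOn (fun x : ℝ => x ^ n * exp (-(r * x))) (Ioi 0) := by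
  have hn : (-1 : ℝ) < n := by linarith [(n.cast_nonneg : (0:ℝ) ≤ n)]
  refine (integrableOn_rpow_mul_exp_neg_mul_rpow hn one_pos hr).congr_fun (fun x _ => ?_)
    measurableSet_Ioi
  simp only [rpow_natCast, rpow_one, neg_mul]

lemma integral_pow_mul_exp_neg_mul_Ioi (n : ℕ) (hr : 0 < r) :
    ∫ x in Ioi (0:ℝ), x ^ n * exp (-(r * x)) = n ! / r ^ (n + 1) := by
  have h := integral_rpow_mul_exp_neg_mul_Ioi (a := n + 1) (by positivity) hr
  rw [add_sub_cancel_right, Gamma_nat_eq_factorial, ← Nat.cast_succ] at h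
  simp only [rpow_natCast] at h
  rw [h, one_div_pow, one_div_mul_eq_div]

end ExponentialMoments

theorem integrable_uncurry_of_nonneg {α β : Type*} [MeasurableSpace α] [MeasurableSpace β]
    {μ : Measure α} {ν : Measure β} [SFinite μ] [SFinite ν] {f : α → β → ℝ}
    (hf : AEStronglyMeasurable (Function.uncurry f) (μ.prod ν))
    (hf_nonneg : ∀ᵐ y ∂ν, ∀ᵐ x ∂μ, 0 ≤ f x y)
    (hf_int : ∀ᵐ y ∂ν, Integrable (f · y) μ)
    (hF : Integrable (fun y => ∫ x, f x y ∂μ) ν) :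
    Integrable (Function.uncurry f) (μ.prod ν) := by
  refine (integrable_prod_iff' hf).2 ⟨hf_int, hF.congr ?_⟩
  filter_upwards [hf_nonneg] with y hy
  exact integral_congr_ae (by filter_upwards [hy] with x hx using (norm_of_nonneg hx).symm)

lemma integrableOn_pow_mul_exp_kernel (n : ℕ) (w : ℝ) {γ s : ℝ} (hγ : 0 < γ) (hs : 0 < s) :
    IntegrableOn (fun x => x ^ n * (γ * s * exp (-(γ * s * x)) * w)) (Ioi 0) :=
  IntegrableOn.congr_fun
    ((integrableOn_pow_mul_exp_neg_mul_Ioi n (mul_pos hγ hs)).const_mul (γ * s * w))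
    (fun x _ => by ring) measurableSet_Ioi

lemma integral_pow_mul_exp_kernel (n : ℕ) (w : ℝ) {γ s : ℝ} (hγ : 0 < γ) (hs : 0 < s) :
    ∫ x in Ioi (0:ℝ), x ^ n * (γ * s * exp (-(γ * s * x)) * w) = n ! * w / (γ * s) ^ n := by
  have hγs : γ * s ≠ 0 := (mul_pos hγ hs).ne'
  calc ∫ x in Ioi (0:ℝ), x ^ n * (γ * s * exp (-(γ * s * x)) * w)
      = γ * s * w * ∫ x in Ioi (0:ℝ), x ^ n * exp (-(γ * s * x)) := by
        rw [← integral_const_mul]; congr 1; ext x; ring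
    _ = n ! * w / (γ * s) ^ n := by
        rw [integral_pow_mul_exp_neg_mul_Ioi n (mul_pos hγ hs)]; field_simp; ring

noncomputable def isegmentKernel (d : ℕ) (γ t s x : ℝ) : ℝ :=
  γ * s * exp (-(γ * s * x)) * (d * s ^ (d - 1) / t ^ d)

noncomputable def isegmentDensity (d : ℕ) (γ t x : ℝ) : ℝ :=
  ∫ s in (0:ℝ)..t, isegmentKernel d γ t s x

section IsegmentMoments

variable {d n : ℕ} {γ t : ℝ}

lemma integral_pow_mul_isegmentKernel (hnd : n < d) (hγ : 0 < γ) {s : ℝ} (hs : 0 < s) :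
    ∫ x in Ioi (0:ℝ), x ^ n * isegmentKernel d γ t s x
      = n ! * d / (γ ^ n * t ^ d) * s ^ (d - 1 - n) := by
  obtain ⟨k, rfl⟩ := Nat.exists_eq_add_of_lt hnd
  unfold isegmentKernel
  rw [integral_pow_mul_exp_kernel n _ hγ hs, show n + k + 1 - 1 - n = k by omega,
    show n + k + 1 - 1 = n + k by omega]
  have := hγ.ne'
  have := hs.ne'
  field_simp
  ring

lemma integrable_pow_mul_isegmentKernel (hnd : n < d) (hγ : 0 < γ) :
    Integrable (Function.uncurry fun x s => x ^ n * isegmentKernel d γ t s x)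
      ((volume.restrict (Ioi 0)).prod (volume.restrict (Ioc 0 t))) := by
  have hs_mem : ∀ᵐ s ∂(volume.restrict (Ioc 0 t)), s ∈ Ioc 0 t :=
    ae_restrict_mem measurableSet_Ioc
  have hs_pos : ∀ᵐ s ∂(volume.restrict (Ioc 0 t)), 0 < s := hs_mem.mono fun s hs => hs.1
  refine integrable_uncurry_of_nonneg
    (Continuous.aestronglyMeasurable (by unfold isegmentKernel; fun_prop)) ?_ ?_ ?_
  · filter_upwards [hs_mem] with s ⟨hs, hst⟩
    filter_upwards [ae_restrict_mem measurableSet_Ioi] with x (hx : 0 < x)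
    have : 0 < t := hs.trans_le hst
    unfold isegmentKernel
    positivity
  · filter_upwards [hs_pos] with s hs
    exact integrableOn_pow_mul_exp_kernel n _ hγ hs
  · have hpow :
        IntegrableOn (fun s : ℝ => n ! * d / (γ ^ n * t ^ d) * s ^ (d - 1 - n)) (Ioc 0 t) :=
      (by fun_prop : Continuous _).integrableOn_Ioc
    refine hpow.congr_fun_ae ?_
    filter_upwards [hs_pos] with s hs
    exact (integral_pow_mul_isegmentKernel hnd hγ hs).symm

theorem integrableOn_and_integral_pow_mul_isegmentDensity (hnd : n < d) (hγ : 0 < γ)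
    (ht : 0 < t) :
    IntegrableOn (fun x => x ^ n * isegmentDensity d γ t x) (Ioi 0) ∧
      ∫ x in Ioi (0:ℝ), x ^ n * isegmentDensity d γ t x
        = n ! * d / ((d - n) * γ ^ n * t ^ n) := by
  have hrepr : (fun x => x ^ n * isegmentDensity d γ t x) = fun x =>
      ∫ s in Ioc 0 t, x ^ n * isegmentKernel d γ t s x := by
    funext x
    rw [isegmentDensity, intervalIntegral.integral_of_le ht.le, integral_const_mul]
  have hint := integrable_pow_mul_isegmentKernel (t := t) hnd hγ
  refine ⟨hrepr ▸ hint.integral_prod_left, ?_⟩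
  rw [hrepr, integral_integral_swap hint,
    setIntegral_congr_fun measurableSet_Ioc
      fun s hs => integral_pow_mul_isegmentKernel hnd hγ hs.1,
    integral_const_mul, ← intervalIntegral.integral_of_le ht.le, integral_pow]
  obtain ⟨k, rfl⟩ := Nat.exists_eq_add_of_lt hnd
  rw [show n + k + 1 - 1 - n = k by omega,
    show ((n + k + 1 : ℕ) : ℝ) - n = k + 1 by push_cast; ring]
  have := hγ.ne'
  have := ht.ne'
  have : (k : ℝ) + 1 ≠ 0 := by positivity
  push_cast
  field_simp
  ring

end IsegmentMoments

/-- The second moment of the length of the typical I-segment of a stationary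
and isotropic spatial STIT tessellation with time parameter `t` equals `24/t²`. -/
theorem stit_Isegment_second_moment_spatial (t : ℝ) (ht : 0 < t) :
    MeasureTheory.IntegrableOn
      (fun x : ℝ => x ^ 2 *
        ∫ s in (0:ℝ)..t, (1 / 2) * s * Real.exp (-((1 / 2) * s * x)) * (3 * s ^ 2 / t ^ 3))
      (Set.Ioi 0) ∧
    (∫ x in Set.Ioi (0:ℝ), x ^ 2 *
        ∫ s in (0:ℝ)..t, (1 / 2) * s * Real.exp (-((1 / 2) * s * x)) * (3 * s ^ 2 / t ^ 3))
      = 24 / t ^ 2 := by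
  have h := integrableOn_and_integral_pow_mul_isegmentDensity (n := 2) (d := 3) (by norm_num)
    (by norm_num : (0:ℝ) < 1 / 2) ht
  have hdens : ∀ x, isegmentDensity 3 (1 / 2) t x
      = ∫ s in (0:ℝ)..t, (1 / 2) * s * Real.exp (-((1 / 2) * s * x)) * (3 * s ^ 2 / t ^ 3) := by
    intro x
    norm_num [isegmentDensity, isegmentKernel]
  simp only [hdens] at h
  refine ⟨h.1, h.2.trans ?_⟩
  norm_num
  ring
end

section
/- For every integer d ≥ 2 and all real numbers t > 0 and γ > 0, the length density of the typical I-segment has the power-law tail asymptotics x^{d+1}·p_d(x) → d·d!/(γ·t)^d as x → ∞, where p_d(x) = ∫₀ᵗ γ·s·e^{−γ·s·x} · (d·s^{d−1}/t^d) ds. -/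
/-!
The substitution `u = γ x s` turns `x^{d+1} p_d(x)` into `d / (γ t)^d` times the lower incomplete
Gamma integral `∫₀^{γ t x} u^d e^{-u} du`, whose upper limit tends to `∞` with `x`, so the
integral tends to `Γ(d+1) = d!`.
-/

open MeasureTheory Real Filter Set
open scoped Nat Topology

lemma integral_Ioi_pow_mul_exp_neg (n : ℕ) : ∫ u in Ioi (0:ℝ), u ^ n * exp (-u) = n ! := by
  rw [← Gamma_nat_eq_factorial, Gamma_eq_integral (by positivity)]
  simp [rpow_natCast, mul_comm]

lemma tendsto_intervalIntegral_pow_mul_exp_neg (n : ℕ) :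
    Tendsto (fun y => ∫ u in (0:ℝ)..y, u ^ n * exp (-u)) atTop (𝓝 (n ! : ℝ)) := by
  have hint : IntegrableOn (fun u : ℝ => u ^ n * exp (-u)) (Ioi 0) :=
    .of_integral_ne_zero (by rw [integral_Ioi_pow_mul_exp_neg]; positivity)
  rw [← integral_Ioi_pow_mul_exp_neg]
  exact intervalIntegral_tendsto_integral_Ioi 0 hint tendsto_id

lemma natCast_mul_pow_sub_one_mul_self {R : Type*} [Semiring R] (n : ℕ) (a : R) :
    (n : R) * a ^ (n - 1) * a = n * a ^ n := by
  rcases n with _ | n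
  · simp
  · rw [mul_assoc, Nat.add_sub_cancel, ← pow_succ]

noncomputable def typicalISegmentDensity (d : ℕ) (t γ x : ℝ) : ℝ :=
  ∫ s in (0:ℝ)..t, γ * s * exp (-(γ * s * x)) * (d * s ^ (d - 1) / t ^ d)

lemma pow_succ_mul_typicalISegmentDensity (d : ℕ) {t γ x : ℝ} (hγ : γ ≠ 0) (hx : x ≠ 0) :
    x ^ (d + 1) * typicalISegmentDensity d t γ x =
      d / (γ * t) ^ d * ∫ u in (0:ℝ)..γ * t * x, u ^ d * exp (-u) := by
  have hintegrand (s : ℝ) : γ * s * exp (-(γ * s * x)) * (d * s ^ (d - 1) / t ^ d) =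
      γ * d / (t ^ d * (γ * x) ^ d) * ((γ * x * s) ^ d * exp (-(γ * x * s))) := by
    rw [mul_pow (γ * x), mul_right_comm γ s x]
    field_simp
    rw [← natCast_mul_pow_sub_one_mul_self]
    ring
  rw [typicalISegmentDensity, intervalIntegral.integral_congr (fun s _ => hintegrand s),
    intervalIntegral.integral_const_mul,
    intervalIntegral.integral_comp_mul_left (fun u => u ^ d * exp (-u)) (mul_ne_zero hγ hx),
    mul_zero, smul_eq_mul, mul_right_comm γ x t, mul_pow, mul_pow]
  field_simp
  ring

theorem stit_Isegment_density_tail_asymptotics_general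
    (d : ℕ) (t γ : ℝ) (ht : 0 < t) (hγ : 0 < γ) :
    Filter.Tendsto
      (fun x : ℝ => x ^ (d + 1) *
        ∫ s in (0:ℝ)..t, γ * s * Real.exp (-(γ * s * x)) * (d * s ^ (d - 1) / t ^ d))
      Filter.atTop
      (nhds ((d : ℝ) * (Nat.factorial d : ℝ) / (γ * t) ^ d)) := by
  have hscale : Tendsto (fun x => γ * t * x) atTop atTop :=
    tendsto_id.const_mul_atTop (mul_pos hγ ht)
  have hlim := ((tendsto_intervalIntegral_pow_mul_exp_neg d).comp hscale).const_mul
    ((d : ℝ) / (γ * t) ^ d)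
  rw [mul_div_right_comm]
  refine hlim.congr' ?_
  filter_upwards [eventually_ne_atTop 0] with x hx
  exact (pow_succ_mul_typicalISegmentDensity d hγ.ne' hx).symm

/-- Power-law tail asymptotics of the typical I-segment length density:
`x^{d+1} · p_d(x) → d · d! / (γ t)^d` as `x → ∞`. -/
theorem stit_Isegment_density_tail_asymptotics
    (d : ℕ) (hd : 2 ≤ d) (t γ : ℝ) (ht : 0 < t) (hγ : 0 < γ) :
    Filter.Tendsto
      (fun x : ℝ => x ^ (d + 1) *
        ∫ s in (0:ℝ)..t, γ * s * Real.exp (-(γ * s * x)) * (d * s ^ (d - 1) / t ^ d))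
      Filter.atTop
      (nhds ((d : ℝ) * (Nat.factorial d : ℝ) / (γ * t) ^ d)) :=
  stit_Isegment_density_tail_asymptotics_general d t γ ht hγ
end
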